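/- arXiv:2210.14689 — 7 statements merged into one kernel-verified Lean document; each statement's English description precedes it below -/
import Mathlib

section
/- Given a fixed point free pair of homomorphisms φ, ψ : G → N between finite groups of the same order, the subset {λ(φ(σ))ρ(ψ(σ)) : σ ∈ G} of Hol(N) is a regular subgroup of Perm(N) isomorphic to G. -/
/-- The left regular representation `λ(γ) = (x ↦ γx)`. -/
def lam (Γ : Type*) [Group Γ] : Γ →* Equiv.Perm Γ :=
  MonoidHom.mk' (fun γ => Equiv.mulLeft γ) (by intro a b; ext x; simp [mul_assoc])

/-- The right regular representation `ρ(γ) = (x ↦ xγ⁻¹)`. -/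
def rho (Γ : Type*) [Group Γ] : Γ →* Equiv.Perm Γ :=
  MonoidHom.mk' (fun γ => Equiv.mulRight γ⁻¹)
    (by intro a b; ext x; simp [mul_assoc])

/-- The holomorph `Hol(Γ)`. -/
def Hol (Γ : Type*) [Group Γ] : Subgroup (Equiv.Perm Γ) :=
  Subgroup.closure (Set.range (rho Γ) ∪ Set.range (MulAut.toPerm (M := Γ)))

/-- A subgroup of `Perm Γ` is regular if it acts transitively and freely on `Γ`. -/
def IsRegularSubgroup {Γ : Type*} [Group Γ] (Δ : Subgroup (Equiv.Perm Γ)) : Prop :=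
  (∀ x y : Γ, ∃ δ ∈ Δ, δ x = y) ∧ ∀ δ ∈ Δ, δ ≠ 1 → ∀ x : Γ, δ x ≠ x

/-! The map `σ ↦ λ(φ σ) ρ(ψ σ)` is a homomorphism `G → Perm N`, since images of `λ` and `ρ`
commute. Its orbit map at `1` is `σ ↦ φ σ (ψ σ)⁻¹`, which fixed point freeness makes injective,
hence bijective as `|G| = |N|`. A homomorphism into `Perm N` whose orbit map at one point is a
bijection is injective with regular image, and `λ(η) = conj(η) ρ(η⁻¹)` puts that image
in `Hol(N)`. -/

section

variable {G N : Type*} [Group G] [Group N]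

theorem lam_apply (η x : N) : lam N η x = η * x := rfl

theorem rho_apply (η x : N) : rho N η x = x * η⁻¹ := rfl

theorem rho_mem_Hol (η : N) : rho N η ∈ Hol N :=
  Subgroup.subset_closure (Or.inl ⟨η, rfl⟩)

theorem lam_eq_conj_mul_rho (η : N) :
    lam N η = MulAut.toPerm (M := N) (MulAut.conj η) * rho N η⁻¹ := by
  ext x
  change η * x = η * (x * η⁻¹⁻¹) * η⁻¹
  group

theorem lam_mem_Hol (η : N) : lam N η ∈ Hol N := by
  rw [lam_eq_conj_mul_rho]
  exact mul_mem (Subgroup.subset_closure (Or.inr ⟨MulAut.conj η, rfl⟩)) (rho_mem_Hol _)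

def lamRho (φ ψ : G →* N) : G →* Equiv.Perm N :=
  MonoidHom.mk' (fun σ => lam N (φ σ) * rho N (ψ σ)) fun _ _ => by
    ext x
    simp [lam_apply, rho_apply, mul_assoc]

theorem lamRho_apply (φ ψ : G →* N) (σ : G) (x : N) :
    lamRho φ ψ σ x = φ σ * x * (ψ σ)⁻¹ := by
  simp [lamRho, lam_apply, rho_apply, mul_assoc]

theorem lamRho_range_le_Hol (φ ψ : G →* N) : (lamRho φ ψ).range ≤ Hol N := by
  rintro _ ⟨σ, rfl⟩
  exact mul_mem (lam_mem_Hol _) (rho_mem_Hol _)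

theorem injective_mul_inv_of_fixedPointFree {φ ψ : G →* N}
    (hfpf : ∀ σ : G, φ σ = ψ σ → σ = 1) : Function.Injective fun σ => φ σ * (ψ σ)⁻¹ := by
  intro a b hab
  have : φ (b⁻¹ * a) = ψ (b⁻¹ * a) :=
    calc φ (b⁻¹ * a) = (φ b)⁻¹ * (φ a * (ψ a)⁻¹) * ψ a := by simp only [map_mul, map_inv]; group
      _ = ψ (b⁻¹ * a) := by simp only at hab; rw [hab, map_mul, map_inv]; group
  exact (inv_mul_eq_one.mp (hfpf _ this)).symm

theorem injective_of_bijective_apply {Γ : Type*} {f : G →* Equiv.Perm Γ} {x₀ : Γ}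
    (hf : Function.Bijective fun σ => f σ x₀) : Function.Injective f :=
  fun _ _ hab => hf.1 (congrArg (· x₀) hab)

theorem isRegularSubgroup_range_of_bijective_apply {Γ : Type*} [Group Γ]
    {f : G →* Equiv.Perm Γ} {x₀ : Γ}
    (hf : Function.Bijective fun σ => f σ x₀) : IsRegularSubgroup f.range := by
  constructor
  · intro x y
    obtain ⟨τ, rfl⟩ := hf.2 x
    obtain ⟨σ, rfl⟩ := hf.2 y
    refine ⟨f (σ * τ⁻¹), ⟨_, rfl⟩, ?_⟩
    simp [← Equiv.Perm.mul_apply, ← map_mul]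
  · rintro _ ⟨σ, rfl⟩ hσ x hx
    obtain ⟨τ, rfl⟩ := hf.2 x
    have : σ * τ = τ := hf.1 (by simpa only [map_mul, Equiv.Perm.mul_apply] using hx)
    exact hσ (by rw [mul_eq_right.mp this, map_one])

end

/-- Given a fixed point free pair of homomorphisms `φ, ψ : G → N` between finite groups
of the same order, the subset `{λ(φ(σ))ρ(ψ(σ)) : σ ∈ G}` of `Hol(N)` is a regular
subgroup of `Perm N` isomorphic to `G`. -/
theorem stmt3 {G N : Type*} [Group G] [Group N] [Fintype G] [Fintype N]
    (hcard : Fintype.card G = Fintype.card N)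
    (φ ψ : G →* N) (hfpf : ∀ σ : G, φ σ = ψ σ → σ = 1) :
    ∃ Δ : Subgroup (Equiv.Perm N),
      (Δ : Set (Equiv.Perm N)) = {p | ∃ σ : G, p = lam N (φ σ) * rho N (ψ σ)} ∧
      Δ ≤ Hol N ∧ IsRegularSubgroup Δ ∧ Nonempty (G ≃* Δ) := by
  have hbij : Function.Bijective fun σ => lamRho φ ψ σ 1 := by
    simp only [lamRho_apply, mul_one]
    exact (Fintype.bijective_iff_injective_and_card _).2
      ⟨injective_mul_inv_of_fixedPointFree hfpf, hcard⟩
  refine ⟨(lamRho φ ψ).range, ?_, lamRho_range_le_Hol φ ψ,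
    isRegularSubgroup_range_of_bijective_apply hbij,
    ⟨MonoidHom.ofInjective (injective_of_bijective_apply hbij)⟩⟩
  ext p
  simp [eq_comm, lamRho]
end

section
/- If a finite group N admits an exact factorization N = AB by subgroups A and B (i.e., N = AB and A ∩ B = 1), then the pair (A × B, N) is realizable; that is, Hol(N) contains a regular subgroup isomorphic to A × B. -/
/-- `(G, N)` is realizable: `Hol(N)` contains a regular subgroup isomorphic to `G`. -/
def Realizable (G : Type*) [Group G] (N : Type*) [Group N] : Prop :=
  ∃ Δ : Subgroup (Equiv.Perm N), Δ ≤ Hol N ∧ IsRegularSubgroup Δ ∧ Nonempty (G ≃* Δ)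

/-!
The group `A × B` acts on `N` by `(a, b) · x = a x b⁻¹`, through left and right translations,
which lie in `Hol(N)`. Writing `y = a₂ b₂` and `x = a₁ b₁`, the element `(a₂ a₁⁻¹, b₂⁻¹ b₁)` moves
`x` to `y`, so the action is transitive. If `(a, b)` fixes `x = a₁ b₁`, then
`a₁⁻¹ a a₁ = b₁ b b₁⁻¹` lies in `A ∩ B = 1`, so the action is free. A free and transitive
action is faithful, and its image is a regular subgroup isomorphic to `A × B`.
-/

section Holomorph

variable {Γ : Type*} [Group Γ]

lemma rho_mem_Hol_s4 (γ : Γ) : rho Γ γ ∈ Hol Γ :=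
  Subgroup.subset_closure (Or.inl ⟨γ, rfl⟩)

lemma mulAut_toPerm_mem_Hol (f : MulAut Γ) : MulAut.toPerm (M := Γ) f ∈ Hol Γ :=
  Subgroup.subset_closure (Or.inr ⟨f, rfl⟩)

lemma mulLeft_mem_Hol (a : Γ) : Equiv.mulLeft a ∈ Hol Γ := by
  have h : Equiv.mulLeft a = rho Γ a⁻¹ * MulAut.toPerm (M := Γ) (MulAut.conj a) := by
    ext x
    simp only [Equiv.coe_mulLeft, Equiv.Perm.coe_mul, Function.comp_apply, rho,
      MonoidHom.mk'_apply, Equiv.coe_mulRight, inv_inv]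
    show a * x = a * x * a⁻¹ * a
    group
  rw [h]
  exact mul_mem (rho_mem_Hol_s4 _) (mulAut_toPerm_mem_Hol _)

lemma realizable_of_free_of_transitive {G : Type*} [Group G] (φ : G →* Equiv.Perm Γ)
    (hHol : ∀ g, φ g ∈ Hol Γ) (htrans : ∀ x y : Γ, ∃ g, φ g x = y)
    (hfree : ∀ g x, φ g x = x → g = 1) : Realizable G Γ := by
  have hinj : Function.Injective φ :=
    (injective_iff_map_eq_one φ).mpr fun g hg => hfree g 1 (by rw [hg]; rfl)
  refine ⟨φ.range, ?_, ⟨?_, ?_⟩, ⟨MonoidHom.ofInjective hinj⟩⟩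
  · rintro _ ⟨g, rfl⟩
    exact hHol g
  · intro x y
    obtain ⟨g, hg⟩ := htrans x y
    exact ⟨φ g, ⟨g, rfl⟩, hg⟩
  · rintro _ ⟨g, rfl⟩ hg x hx
    exact hg (by rw [hfree g x hx, map_one])

end Holomorph

section BiTranslation

variable {N : Type*} [Group N]

def biTranslation (A B : Subgroup N) : A × B →* Equiv.Perm N :=
  MonoidHom.mk' (fun p => Equiv.mulLeft (p.1 : N) * Equiv.mulRight (p.2 : N)⁻¹)
    (by intro p q; ext x; simp [mul_assoc])

@[simp]
lemma biTranslation_apply (A B : Subgroup N) (p : A × B) (x : N) :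
    biTranslation A B p x = p.1 * x * (p.2 : N)⁻¹ := by
  simp [biTranslation, mul_assoc]

lemma biTranslation_mem_Hol (A B : Subgroup N) (p : A × B) : biTranslation A B p ∈ Hol N :=
  mul_mem (mulLeft_mem_Hol _) (rho_mem_Hol_s4 _)

lemma exists_biTranslation_apply_eq {A B : Subgroup N}
    (hfact : ∀ n : N, ∃ a ∈ A, ∃ b ∈ B, n = a * b) (x y : N) :
    ∃ p, biTranslation A B p x = y := by
  obtain ⟨a₁, ha₁, b₁, hb₁, rfl⟩ := hfact x
  obtain ⟨a₂, ha₂, b₂, hb₂, rfl⟩ := hfact y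
  refine ⟨(⟨a₂ * a₁⁻¹, mul_mem ha₂ (inv_mem ha₁)⟩, ⟨b₂⁻¹ * b₁, mul_mem (inv_mem hb₂) hb₁⟩), ?_⟩
  rw [biTranslation_apply]
  group

lemma eq_one_of_biTranslation_apply_eq_self {A B : Subgroup N}
    (hfact : ∀ n : N, ∃ a ∈ A, ∃ b ∈ B, n = a * b) (hexact : A ⊓ B = ⊥)
    (p : A × B) (x : N) (hfix : biTranslation A B p x = x) : p = 1 := by
  obtain ⟨⟨a, ha⟩, ⟨b, hb⟩⟩ := p
  obtain ⟨a₁, ha₁, b₁, hb₁, rfl⟩ := hfact x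
  rw [biTranslation_apply] at hfix
  have hconj : a₁⁻¹ * a * a₁ = b₁ * b * b₁⁻¹ := by
    calc a₁⁻¹ * a * a₁ = a₁⁻¹ * (a * (a₁ * b₁) * b⁻¹) * b * b₁⁻¹ := by group
      _ = b₁ * b * b₁⁻¹ := by rw [hfix]; group
  have hmem : a₁⁻¹ * a * a₁ ∈ A ⊓ B := Subgroup.mem_inf.mpr
    ⟨mul_mem (mul_mem (inv_mem ha₁) ha) ha₁, hconj ▸ mul_mem (mul_mem hb₁ hb) (inv_mem hb₁)⟩
  rw [hexact, Subgroup.mem_bot] at hmem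
  have ha1 : a = 1 := by simpa [mul_assoc] using congrArg (fun t => a₁ * t * a₁⁻¹) hmem
  have hb1 : b = 1 := conj_eq_one_iff.mp (hconj ▸ hmem)
  subst ha1 hb1
  rfl

end BiTranslation

theorem stmt4_general {N : Type*} [Group N] (A B : Subgroup N)
    (hfact : ∀ n : N, ∃ a ∈ A, ∃ b ∈ B, n = a * b)
    (hexact : A ⊓ B = ⊥) :
    Realizable (A × B) N :=
  realizable_of_free_of_transitive (biTranslation A B) (biTranslation_mem_Hol A B)
    (exists_biTranslation_apply_eq hfact)
    (eq_one_of_biTranslation_apply_eq_self hfact hexact)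

/-- If a finite group `N` admits an exact factorization `N = AB`, then the pair
`(A × B, N)` is realizable. -/
theorem stmt4 {N : Type*} [Group N] [Finite N] (A B : Subgroup N)
    (hfact : ∀ n : N, ∃ a ∈ A, ∃ b ∈ B, n = a * b)
    (hexact : A ⊓ B = ⊥) :
    Realizable (A × B) N :=
  stmt4_general A B hfact hexact
end

section
/- With f, g, h as above (f : G → Aut(N) a homomorphism, g : G → N a bijection with g(στ) = g(σ)·f(σ)(g(τ)), and h(σ) = conj(g(σ))f(σ)), the product set f(G)h(G) is a subgroup of Aut(N), it contains Inn(N), and f(G)·Inn(N) = h(G)·Inn(N). -/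
open Pointwise

/-!
The cocycle identity turns `f(σ)·h(τ) = f(σ)·conj(g τ)·f(τ)` into `conj(g(σ)⁻¹ g(στ))·f(στ)`,
so `f(G)h(G) ⊆ Inn(N)f(G)`; conversely, surjectivity of `g` lets us choose `σ` with
`g(σ)⁻¹ g(ρ)` equal to any prescribed `n`, so every `conj(n)·f(ρ)` arises. Since `Inn(N)` is
normal, `Inn(N)f(G)` is the subgroup `Inn(N) ⊔ f(G)`. Finally `h(σ) ∈ f(σ)·Inn(N)` by normality,
so `f(G)` and `h(G)` have the same `Inn(N)`-cosets.
-/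

namespace MulAut

variable {N : Type*} [Group N]

theorem mul_conj (φ : MulAut N) (n : N) : φ * conj n = conj (φ n) * φ := by
  ext m
  simp [conj_apply, mul_assoc]

instance normal_conj_range : (conj : N →* MulAut N).range.Normal where
  conj_mem := by
    rintro - ⟨n, rfl⟩ φ
    exact ⟨φ n, by rw [mul_conj, mul_inv_cancel_right]⟩

end MulAut

theorem Set.range_mul_subgroup_eq_of_inv_mul_mem {α ι : Type*} [Group α] {a b : ι → α}
    (H : Subgroup α) (hab : ∀ i, (a i)⁻¹ * b i ∈ H) :
    Set.range a * (H : Set α) = Set.range b * H := by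
  apply subset_antisymm
  · rintro - ⟨-, ⟨i, rfl⟩, k, hk, rfl⟩
    exact ⟨b i, ⟨i, rfl⟩, (b i)⁻¹ * a i * k,
      H.mul_mem (by simpa using H.inv_mem (hab i)) hk, by group⟩
  · rintro - ⟨-, ⟨i, rfl⟩, k, hk, rfl⟩
    exact ⟨a i, ⟨i, rfl⟩, (a i)⁻¹ * b i * k, H.mul_mem (hab i) hk, by group⟩

section Cocycle

variable {G N : Type*} [Group G] [Group N] {f : G →* MulAut N} {g : G → N}

theorem mul_conj_mul_eq_of_cocycle (hcoc : ∀ σ τ : G, g (σ * τ) = g σ * f σ (g τ)) (σ τ : G) :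
    f σ * (MulAut.conj (g τ) * f τ) = MulAut.conj ((g σ)⁻¹ * g (σ * τ)) * f (σ * τ) := by
  rw [← mul_assoc, MulAut.mul_conj, hcoc, inv_mul_cancel_left, map_mul, mul_assoc]

theorem range_mul_range_conj_mul_eq_of_cocycle
    (hcoc : ∀ σ τ : G, g (σ * τ) = g σ * f σ (g τ)) (hg : Function.Surjective g) :
    Set.range f * Set.range (fun τ ↦ MulAut.conj (g τ) * f τ) =
      ((MulAut.conj : N →* MulAut N).range : Set (MulAut N)) * Set.range f := by
  apply subset_antisymm
  · rintro - ⟨-, ⟨σ, rfl⟩, -, ⟨τ, rfl⟩, rfl⟩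
    dsimp only
    rw [mul_conj_mul_eq_of_cocycle hcoc]
    exact Set.mul_mem_mul ⟨_, rfl⟩ ⟨_, rfl⟩
  · rintro - ⟨-, ⟨n, rfl⟩, -, ⟨ρ, rfl⟩, rfl⟩
    obtain ⟨σ, hσ⟩ := hg (g ρ * n⁻¹)
    refine ⟨f σ, ⟨σ, rfl⟩, _, ⟨σ⁻¹ * ρ, rfl⟩, ?_⟩
    simp only [mul_conj_mul_eq_of_cocycle hcoc, mul_inv_cancel_left, hσ, mul_inv_rev, inv_inv,
      inv_mul_cancel_right]

end Cocycle

theorem stmt6_general {G N : Type*} [Group G] [Group N]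
    (f : G →* MulAut N) (g : G → N) (hg : Function.Bijective g)
    (hcoc : ∀ σ τ : G, g (σ * τ) = g σ * f σ (g τ))
    (h : G → MulAut N) (hh : ∀ σ : G, h σ = MulAut.conj (g σ) * f σ) :
    ∃ P : Subgroup (MulAut N),
      (P : Set (MulAut N)) = Set.range f * Set.range h ∧
      ((MulAut.conj : N →* MulAut N).range ≤ P) ∧
      Set.range f * ((MulAut.conj : N →* MulAut N).range : Set (MulAut N)) =
        Set.range h * ((MulAut.conj : N →* MulAut N).range : Set (MulAut N)) := by
  obtain rfl : h = fun σ ↦ MulAut.conj (g σ) * f σ := funext hh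
  refine ⟨(MulAut.conj : N →* MulAut N).range ⊔ f.range, ?_, le_sup_left, ?_⟩
  · rw [Subgroup.normal_mul, range_mul_range_conj_mul_eq_of_cocycle hcoc hg.surjective,
      MonoidHom.coe_range f]
  · refine Set.range_mul_subgroup_eq_of_inv_mul_mem _ fun σ ↦ ?_
    simpa [mul_assoc] using
      Subgroup.Normal.conj_mem inferInstance _ (MonoidHom.mem_range.mpr ⟨g σ, rfl⟩) (f σ)⁻¹

/-- With `f : G → Aut(N)` a homomorphism, `g : G → N` a bijection satisfying the cocycle
condition, and `h(σ) = conj(g(σ))f(σ)`, the product set `f(G)h(G)` is a subgroup of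
`Aut(N)` containing `Inn(N)`, and `f(G)·Inn(N) = h(G)·Inn(N)`. -/
theorem stmt6 {G N : Type*} [Group G] [Group N] [Fintype G] [Fintype N]
    (hcard : Fintype.card G = Fintype.card N)
    (f : G →* MulAut N) (g : G → N) (hg : Function.Bijective g)
    (hcoc : ∀ σ τ : G, g (σ * τ) = g σ * f σ (g τ))
    (h : G → MulAut N) (hh : ∀ σ : G, h σ = MulAut.conj (g σ) * f σ) :
    ∃ P : Subgroup (MulAut N),
      (P : Set (MulAut N)) = Set.range f * Set.range h ∧
      ((MulAut.conj : N →* MulAut N).range ≤ P) ∧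
      Set.range f * ((MulAut.conj : N →* MulAut N).range : Set (MulAut N)) =
        Set.range h * ((MulAut.conj : N →* MulAut N).range : Set (MulAut N)) :=
  stmt6_general f g hg hcoc h hh
end

section
/- If (G, N) is realizable, then there exists a subgroup P of Aut(N) containing Inn(N) such that P = AB where A and B are subgroups that are isomorphic to quotients of G and satisfy A·Inn(N) = B·Inn(N). -/
/-!
Every element of `Hol(N)` has the form `σ x = φ x * σ 1` with `φ ∈ Aut(N)`, and both
`α σ = (x ↦ σ x * (σ 1)⁻¹) = φ` and `β σ = (x ↦ (σ 1)⁻¹ * σ x) = conj(σ 1)⁻¹ ∘ φ` are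
homomorphisms `Hol(N) → Aut(N)`. Restricted to a regular subgroup `Δ ≅ G` they give subgroups `A` and `B` that
are images of `G`, and the elements `α δ * (β δ)⁻¹ = conj (δ 1)` run through all of `Inn(N)` since
`Δ` is transitive. Hence `A·Inn(N) = B·Inn(N) =: P`, and `P = Inn(N)·B = A·B`.
-/

open Pointwise

namespace Hol

variable {N : Type*} [Group N]

theorem exists_apply_eq_mulAut_mul {σ : Equiv.Perm N} (hσ : σ ∈ Hol N) :
    ∃ φ : MulAut N, ∀ x, σ x = φ x * σ 1 := by
  induction hσ using Subgroup.closure_induction with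
  | mem τ hτ =>
    rcases hτ with ⟨n, rfl⟩ | ⟨φ, rfl⟩
    · exact ⟨1, fun x => show x * n⁻¹ = x * (1 * n⁻¹) by rw [one_mul]⟩
    · exact ⟨φ, fun x => show φ x = φ x * φ 1 by rw [map_one, mul_one]⟩
  | one => exact ⟨1, fun x => by simp⟩
  | mul σ τ _ _ ihσ ihτ =>
    obtain ⟨φ, hφ⟩ := ihσ
    obtain ⟨ψ, hψ⟩ := ihτ
    refine ⟨φ * ψ, fun x => ?_⟩
    rw [Equiv.Perm.mul_apply, Equiv.Perm.mul_apply, hφ (τ x), hφ (τ 1), hψ x, map_mul,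
      MulAut.mul_apply, mul_assoc]
  | inv σ _ ihσ =>
    obtain ⟨φ, hφ⟩ := ihσ
    refine ⟨φ⁻¹, fun x => ?_⟩
    have key : ∀ y, σ⁻¹ y = φ⁻¹ (y * (σ 1)⁻¹) := fun y => by
      rw [Equiv.Perm.inv_eq_iff_eq, hφ, MulAut.apply_inv_self, inv_mul_cancel_right]
    rw [key, key, one_mul, map_mul]

theorem apply_mul {σ : Equiv.Perm N} (hσ : σ ∈ Hol N) (x y : N) :
    σ (x * y) = σ x * (σ 1)⁻¹ * σ y := by
  obtain ⟨φ, hφ⟩ := exists_apply_eq_mulAut_mul hσ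
  rw [hφ (x * y), hφ x, hφ y, map_mul]
  group

def toMulAutRight : Hol N →* MulAut N :=
  MonoidHom.mk'
    (fun σ =>
      { toEquiv := (σ : Equiv.Perm N).trans (Equiv.mulRight ((σ : Equiv.Perm N) 1)⁻¹)
        map_mul' := fun x y => by
          show σ.1 (x * y) * (σ.1 1)⁻¹ = σ.1 x * (σ.1 1)⁻¹ * (σ.1 y * (σ.1 1)⁻¹)
          rw [apply_mul σ.2]
          group })
    (fun σ τ => by
      obtain ⟨φ, hφ⟩ := exists_apply_eq_mulAut_mul σ.2
      ext x
      show σ.1 (τ.1 x) * (σ.1 (τ.1 1))⁻¹ = σ.1 (τ.1 x * (τ.1 1)⁻¹) * (σ.1 1)⁻¹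
      rw [hφ (τ.1 x), hφ (τ.1 1), hφ (τ.1 x * (τ.1 1)⁻¹), map_mul, map_inv]
      group)

def toMulAutLeft : Hol N →* MulAut N :=
  MonoidHom.mk'
    (fun σ =>
      { toEquiv := (σ : Equiv.Perm N).trans (Equiv.mulLeft ((σ : Equiv.Perm N) 1)⁻¹)
        map_mul' := fun x y => by
          show (σ.1 1)⁻¹ * σ.1 (x * y) = (σ.1 1)⁻¹ * σ.1 x * ((σ.1 1)⁻¹ * σ.1 y)
          rw [apply_mul σ.2]
          group })
    (fun σ τ => by
      obtain ⟨φ, hφ⟩ := exists_apply_eq_mulAut_mul σ.2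
      ext x
      show (σ.1 (τ.1 1))⁻¹ * σ.1 (τ.1 x) = (σ.1 1)⁻¹ * σ.1 ((τ.1 1)⁻¹ * τ.1 x)
      rw [hφ (τ.1 x), hφ (τ.1 1), hφ ((τ.1 1)⁻¹ * τ.1 x), map_mul, map_inv]
      group)

theorem toMulAutRight_mul_inv_toMulAutLeft (σ : Hol N) :
    toMulAutRight σ * (toMulAutLeft σ)⁻¹ = MulAut.conj ((σ : Equiv.Perm N) 1) := by
  rw [mul_inv_eq_iff_eq_mul]
  ext x
  show σ.1 x * (σ.1 1)⁻¹ = σ.1 1 * ((σ.1 1)⁻¹ * σ.1 x) * (σ.1 1)⁻¹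
  group

end Hol

instance MulAut.normal_range_conj {N : Type*} [Group N] :
    (MulAut.conj : N →* MulAut N).range.Normal where
  conj_mem := by
    rintro _ ⟨n, rfl⟩ φ
    refine ⟨φ n, MulEquiv.ext fun x => ?_⟩
    show φ n * x * (φ n)⁻¹ = φ (n * φ⁻¹ x * n⁻¹)
    simp [mul_assoc]

namespace MonoidHom

variable {H K : Type*} [Group H] [Group K] {f g : H →* K} {I : Subgroup K}

theorem range_le_range_sup_of_mul_inv_mem (hfg : ∀ x, f x * (g x)⁻¹ ∈ I) :
    f.range ≤ g.range ⊔ I := by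
  rintro _ ⟨x, rfl⟩
  have hfx : f x = f x * (g x)⁻¹ * g x := by group
  rw [hfx]
  exact mul_mem (Subgroup.mem_sup_right (hfg x)) (Subgroup.mem_sup_left ⟨x, rfl⟩)

theorem range_sup_eq_range_sup_of_mul_inv_mem (hfg : ∀ x, f x * (g x)⁻¹ ∈ I) :
    f.range ⊔ I = g.range ⊔ I :=
  le_antisymm (sup_le (range_le_range_sup_of_mul_inv_mem hfg) le_sup_right)
    (sup_le (range_le_range_sup_of_mul_inv_mem fun x => by simpa using I.inv_mem (hfg x))
      le_sup_right)

theorem coe_range_sup_eq_range_mul_range [I.Normal] (hfg : ∀ x, f x * (g x)⁻¹ ∈ I)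
    (hI : ∀ i ∈ I, ∃ x, f x * (g x)⁻¹ = i) :
    ((f.range ⊔ I : Subgroup K) : Set K) = f.range * g.range := by
  refine Set.Subset.antisymm ?_ ?_
  · rw [range_sup_eq_range_sup_of_mul_inv_mem hfg, sup_comm, Subgroup.normal_mul]
    rintro _ ⟨i, hi, _, ⟨y, rfl⟩, rfl⟩
    obtain ⟨x, rfl⟩ := hI i hi
    show f x * (g x)⁻¹ * g y ∈ _
    rw [mul_assoc]
    exact Set.mul_mem_mul ⟨x, rfl⟩ (g.range.mul_mem (g.range.inv_mem ⟨x, rfl⟩) ⟨y, rfl⟩)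
  · rintro _ ⟨a, ha, b, hb, rfl⟩
    exact mul_mem (Subgroup.mem_sup_left ha)
      ((range_sup_eq_range_sup_of_mul_inv_mem hfg).ge (Subgroup.mem_sup_left hb))

end MonoidHom

open MonoidHom in
theorem stmt7_general {G N : Type*} [Group G] [Group N]
    (hreal : Realizable G N) :
    ∃ P A B : Subgroup (MulAut N),
      (MulAut.conj : N →* MulAut N).range ≤ P ∧ A ≤ P ∧ B ≤ P ∧
      (P : Set (MulAut N)) = (A : Set (MulAut N)) * (B : Set (MulAut N)) ∧
      (∃ π : G →* A, Function.Surjective π) ∧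
      (∃ π : G →* B, Function.Surjective π) ∧
      (A : Set (MulAut N)) * ((MulAut.conj : N →* MulAut N).range : Set (MulAut N)) =
        (B : Set (MulAut N)) * ((MulAut.conj : N →* MulAut N).range : Set (MulAut N)) := by
  obtain ⟨Δ, hΔ, ⟨htrans, -⟩, ⟨e⟩⟩ := hreal
  set f := Hol.toMulAutRight.comp (Subgroup.inclusion hΔ)
  set g := Hol.toMulAutLeft.comp (Subgroup.inclusion hΔ)
  have hfg (δ : Δ) : f δ * (g δ)⁻¹ = MulAut.conj ((δ : Equiv.Perm N) 1) :=
    Hol.toMulAutRight_mul_inv_toMulAutLeft _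
  have hmem (δ : Δ) : f δ * (g δ)⁻¹ ∈ (MulAut.conj : N →* MulAut N).range := ⟨_, (hfg δ).symm⟩
  have hInn : ∀ i ∈ (MulAut.conj : N →* MulAut N).range, ∃ δ, f δ * (g δ)⁻¹ = i := by
    rintro _ ⟨n, rfl⟩
    obtain ⟨d, hd, rfl⟩ := htrans 1 n
    exact ⟨⟨d, hd⟩, hfg _⟩
  have hsup := range_sup_eq_range_sup_of_mul_inv_mem hmem
  refine ⟨f.range ⊔ MulAut.conj.range, f.range, g.range, le_sup_right, le_sup_left,
    hsup ▸ le_sup_left, coe_range_sup_eq_range_mul_range hmem hInn,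
    ⟨f.rangeRestrict.comp e.toMonoidHom, f.rangeRestrict_surjective.comp e.surjective⟩,
    ⟨g.rangeRestrict.comp e.toMonoidHom, g.rangeRestrict_surjective.comp e.surjective⟩, ?_⟩
  rw [← Subgroup.mul_normal, ← Subgroup.mul_normal, hsup]

/-- If `(G, N)` is realizable, then some subgroup `P` of `Aut(N)` containing `Inn(N)`
factorizes as `P = AB` with `A`, `B` isomorphic to quotients of `G` and
`A·Inn(N) = B·Inn(N)`. -/
theorem stmt7 {G N : Type*} [Group G] [Group N] [Fintype G] [Fintype N]
    (hcard : Fintype.card G = Fintype.card N) (hreal : Realizable G N) :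
    ∃ P A B : Subgroup (MulAut N),
      (MulAut.conj : N →* MulAut N).range ≤ P ∧ A ≤ P ∧ B ≤ P ∧
      (P : Set (MulAut N)) = (A : Set (MulAut N)) * (B : Set (MulAut N)) ∧
      (∃ π : G →* A, Function.Surjective π) ∧
      (∃ π : G →* B, Function.Surjective π) ∧
      (A : Set (MulAut N)) * ((MulAut.conj : N →* MulAut N).range : Set (MulAut N)) =
        (B : Set (MulAut N)) * ((MulAut.conj : N →* MulAut N).range : Set (MulAut N)) :=
  stmt7_general hreal
end

section
/- Assume N has trivial center and P ≤ Aut(N) contains Inn(N). If P = AB is an exact factorization by subgroups A, B with A·Inn(N) = B·Inn(N) and A splits over A ∩ Inn(N), then there is a semidirect product G = (A ∩ Inn(N)) ⋊_α B of the same order as N such that (G, N) is realizable. -/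
open Pointwise

/-!
Since `Z(N) = 1`, `conj : N → Inn(N)` is injective, so the fibre product
`Aut(N) ×_{Out(N)} Aut(N)` acts on `N` by `(φ, ψ) · x = φ(x) n`, where `n` induces `φ ψ⁻¹`;
these permutations lie in `Hol(N)`. Every `b ∈ B ⊆ A·Inn(N) = Inn(N)·C` factors uniquely as
`b = ι(b) π(b)` with `ι(b)` inner and `π(b) ∈ C`, and `π : B → C` is a homomorphism. Hence
`(k, b) ↦ (b, k π(b))` is a homomorphism `(A ∩ Inn(N)) ⋊ B → Aut(N) ×_{Out(N)} Aut(N)`, and the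
orbit map at `1` becomes `(k, b) ↦ b (k π(b))⁻¹ ∈ Inn(N) ≅ N`. This is a bijection because
`P = AB` is exact and contains `Inn(N)`, so the image is regular and has the order of `N`.
-/

section Regular

variable {Γ : Type*} [Group Γ]

theorem isRegularSubgroup_of_bijective_eval {Δ : Subgroup (Equiv.Perm Γ)} (x₀ : Γ)
    (h : Function.Bijective fun δ : Δ => (δ : Equiv.Perm Γ) x₀) : IsRegularSubgroup Δ := by
  refine ⟨fun x y => ?_, fun δ hδ hne x hx => hne ?_⟩
  · obtain ⟨δ₁, rfl⟩ := h.2 x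
    obtain ⟨δ₂, rfl⟩ := h.2 y
    exact ⟨δ₂ * δ₁⁻¹, mul_mem δ₂.2 (inv_mem δ₁.2), by simp⟩
  · obtain ⟨δ₁, rfl⟩ := h.2 x
    have hfix : ((δ₁⁻¹ * ⟨δ, hδ⟩ * δ₁ : Δ) : Equiv.Perm Γ) x₀ = (1 : Δ).1 x₀ := by
      simp [Equiv.Perm.mul_apply, hx]
    have := h.1 hfix
    rw [mul_assoc, inv_mul_eq_one, eq_comm, mul_eq_right] at this
    simpa using congrArg Subtype.val this

theorem rho_mul_toPerm_mem_Hol (n : Γ) (φ : MulAut Γ) :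
    rho Γ n * MulAut.toPerm (M := Γ) φ ∈ Hol Γ :=
  mul_mem (Subgroup.subset_closure (Or.inl ⟨n, rfl⟩))
    (Subgroup.subset_closure (Or.inr ⟨φ, rfl⟩))

theorem realizable_of_bijective_eval {G : Type*} [Group G] (F : G →* Equiv.Perm Γ)
    (hF : F.range ≤ Hol Γ) (x₀ : Γ) (h : Function.Bijective fun g => F g x₀) :
    Realizable G Γ := by
  have hinj : Function.Injective F := fun g g' hgg' => h.1 (by simp only [hgg'])
  let e := MonoidHom.ofInjective hinj
  refine ⟨F.range, hF, isRegularSubgroup_of_bijective_eval x₀ ?_, ⟨e⟩⟩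
  convert h.comp e.symm.bijective using 1
  ext δ
  simp [e, ← MonoidHom.ofInjective_apply hinj]

end Regular

namespace Subgroup

variable {G : Type*} [Group G]

theorem exists_monoidHom_mul_inv_mem {I C B : Subgroup G} [I.Normal] (hIC : I ⊓ C = ⊥)
    (hB : B ≤ I ⊔ C) : ∃ π : B →* C, ∀ b : B, (b : G) * (π b : G)⁻¹ ∈ I := by
  have hdec (b : B) : ∃ c : C, (b : G) * (c : G)⁻¹ ∈ I := by
    obtain ⟨i, hi, c, hc, hic⟩ := mem_sup_of_normal_left.mp (hB b.2)
    exact ⟨⟨c, hc⟩, by rw [← hic]; simpa using hi⟩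
  choose π hπ using hdec
  have huniq (g : G) (c c' : C) (h : g * (c : G)⁻¹ ∈ I) (h' : g * (c' : G)⁻¹ ∈ I) : c = c' := by
    have hcc' : (c : G) * (c' : G)⁻¹ ∈ I ⊓ C :=
      ⟨by simpa [mul_assoc] using mul_mem (inv_mem h) h', C.mul_mem c.2 (C.inv_mem c'.2)⟩
    rw [hIC, mem_bot, mul_inv_eq_one] at hcc'
    exact Subtype.ext hcc'
  refine ⟨MonoidHom.mk' π fun b₁ b₂ => huniq _ _ _ (hπ _) ?_, hπ⟩
  have h : ((b₁ * b₂ : B) : G) * ((π b₁ * π b₂ : C) : G)⁻¹ =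
      b₁ * (b₂ * (π b₂ : G)⁻¹) * (b₁ : G)⁻¹ * (b₁ * (π b₁ : G)⁻¹) := by
    simp only [coe_mul]
    group
  rw [h]
  exact mul_mem (Normal.conj_mem inferInstance _ (hπ b₂) _) (hπ b₁)

variable {A B I : Subgroup G}

theorem inf_map_subtype_eq_bot_of_isComplement' {C : Subgroup A}
    (h : IsComplement' ((A ⊓ I).subgroupOf A) C) : I ⊓ C.map A.subtype = ⊥ := by
  refine eq_bot_iff.mpr ?_
  rintro _ ⟨hI, c, hc, rfl⟩
  have : c ∈ (A ⊓ I).subgroupOf A ⊓ C := ⟨mem_subgroupOf.mpr ⟨c.2, hI⟩, hc⟩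
  rw [h.disjoint.eq_bot, mem_bot] at this
  simp [this]

theorem le_sup_map_subtype_of_isComplement' {C : Subgroup A}
    (h : IsComplement' ((A ⊓ I).subgroupOf A) C) : A ≤ I ⊔ C.map A.subtype := by
  calc A = ((A ⊓ I).subgroupOf A ⊔ C).map A.subtype := by
        rw [h.sup_eq_top, ← MonoidHom.range_eq_map, range_subtype]
    _ = A ⊓ I ⊓ A ⊔ C.map A.subtype := by rw [map_sup, subgroupOf_map_subtype]
    _ ≤ I ⊔ C.map A.subtype := sup_le_sup_right (inf_le_left.trans inf_le_right) _

theorem le_normalizer_inf_of_normal [I.Normal] : A ≤ normalizer ((A ⊓ I :) : Set G) :=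
  (le_inf le_normalizer le_normalizer_of_normal).trans inf_normalizer_le_normalizer_inf

theorem existsUnique_mul_inv_eq (hAB : A ⊓ B = ⊥) (hI : (I : Set G) ⊆ A * B) {π : B → G}
    (hπA : ∀ b, π b ∈ A) (hπI : ∀ b : B, (b : G) * (π b)⁻¹ ∈ I) {i : G} (hi : i ∈ I) :
    ∃! x : (A ⊓ I : Subgroup G) × B, (x.2 : G) * (x.1 * π x.2)⁻¹ = i := by
  refine existsUnique_of_exists_of_unique ?_ fun x y hx hy => ?_
  · obtain ⟨a, ha, b, hb, hab⟩ := hI (I.inv_mem hi)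
    replace hab : a * b = i⁻¹ := hab
    have hk : a * (π ⟨b, hb⟩⁻¹)⁻¹ ∈ A ⊓ I := by
      refine ⟨A.mul_mem ha (A.inv_mem (hπA _)), ?_⟩
      have : a = i⁻¹ * (⟨b, hb⟩⁻¹ : B) := by simp [← hab]
      rw [this, mul_assoc]
      exact I.mul_mem (I.inv_mem hi) (hπI _)
    exact ⟨(⟨_, hk⟩, ⟨b, hb⟩⁻¹), by simp [← mul_inv_rev, hab]⟩
  rw [← hy] at hx
  have hright : x.2 = y.2 := by
    have hdiff : (y.2 : G)⁻¹ * x.2 = (y.1 * π y.2)⁻¹ * (x.1 * π x.2) := by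
      rw [inv_mul_eq_iff_eq_mul, ← mul_assoc, ← hx]
      group
    have hmem : (y.2 : G)⁻¹ * x.2 ∈ A ⊓ B := by
      refine ⟨?_, B.mul_mem (B.inv_mem y.2.2) x.2.2⟩
      rw [hdiff]
      exact A.mul_mem (A.inv_mem (A.mul_mem y.1.2.1 (hπA _))) (A.mul_mem x.1.2.1 (hπA _))
    rw [hAB, mem_bot, inv_mul_eq_one] at hmem
    exact Subtype.ext hmem.symm
  rw [hright] at hx
  exact Prod.ext (Subtype.ext (by simpa using hx)) hright

variable {B C : Subgroup G} [I.Normal]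

noncomputable def conjAction (hCA : C ≤ A) (π : B →* C) : B →* MulAut ↥(A ⊓ I) :=
  (A ⊓ I).normalizerMonoidHom.comp
    ((inclusion (hCA.trans le_normalizer_inf_of_normal)).comp π)

end Subgroup

section InnPullback

variable {N : Type*} [Group N]

theorem MulAut.conj_injective_of_center_eq_bot (hZ : Subgroup.center N = ⊥) :
    Function.Injective (MulAut.conj : N →* MulAut N) := by
  refine (injective_iff_map_eq_one _).mpr fun g hg => ?_
  rw [← Subgroup.mem_bot, ← hZ, Subgroup.mem_center_iff]
  intro h
  have := DFunLike.congr_fun hg h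
  rw [MulAut.conj_apply, MulAut.one_apply, mul_inv_eq_iff_eq_mul] at this
  exact this.symm

theorem MulAut.conj_map (φ : MulAut N) (n : N) :
    MulAut.conj (φ n) = φ * MulAut.conj n * φ⁻¹ := by
  ext x
  simp [MulAut.conj_apply, mul_assoc]

instance MulAut.conj_range_normal : (MulAut.conj : N →* MulAut N).range.Normal where
  conj_mem := by
    rintro _ ⟨n, rfl⟩ φ
    exact ⟨φ n, MulAut.conj_map φ n⟩

variable (N) in
/-- The fibre product `Aut(N) ×_{Out(N)} Aut(N)`. -/
def innPullback : Subgroup (MulAut N × MulAut N) where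
  carrier := {p | p.1 * p.2⁻¹ ∈ (MulAut.conj : N →* MulAut N).range}
  one_mem' := ⟨1, by simp⟩
  mul_mem' {p q} hp hq := by
    change p.1 * q.1 * (p.2 * q.2)⁻¹ ∈ (MulAut.conj : N →* MulAut N).range
    have h : p.1 * q.1 * (p.2 * q.2)⁻¹ = p.1 * (q.1 * q.2⁻¹) * p.1⁻¹ * (p.1 * p.2⁻¹) := by group
    rw [h]
    exact mul_mem (Subgroup.Normal.conj_mem inferInstance _ hq _) hp
  inv_mem' {p} hp := by
    change p.1⁻¹ * p.2⁻¹⁻¹ ∈ (MulAut.conj : N →* MulAut N).range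
    have h : p.1⁻¹ * p.2⁻¹⁻¹ = p.1⁻¹ * (p.1 * p.2⁻¹)⁻¹ * p.1⁻¹⁻¹ := by group
    rw [h]
    exact Subgroup.Normal.conj_mem inferInstance _ (inv_mem hp) _

variable (hN : Function.Injective (MulAut.conj : N →* MulAut N))

noncomputable def innPullbackInner (p : innPullback N) : N :=
  (MonoidHom.ofInjective hN).symm ⟨p.1.1 * p.1.2⁻¹, p.2⟩

theorem conj_innPullbackInner (p : innPullback N) :
    MulAut.conj (innPullbackInner hN p) = p.1.1 * p.1.2⁻¹ := by
  rw [innPullbackInner, ← MonoidHom.ofInjective_apply hN, MulEquiv.apply_symm_apply]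

theorem innPullbackInner_mul (p q : innPullback N) :
    innPullbackInner hN (p * q) = p.1.1 (innPullbackInner hN q) * innPullbackInner hN p := by
  apply hN
  rw [map_mul, MulAut.conj_map, conj_innPullbackInner, conj_innPullbackInner,
    conj_innPullbackInner]
  simp only [Subgroup.coe_mul, Prod.fst_mul, Prod.snd_mul]
  group

noncomputable def innPullbackToPerm : innPullback N →* Equiv.Perm N :=
  MonoidHom.mk' (fun p => rho N (innPullbackInner hN p)⁻¹ * MulAut.toPerm (M := N) p.1.1)
    fun p q => by
      ext x
      change p.1.1 (q.1.1 x) * (innPullbackInner hN (p * q))⁻¹⁻¹ =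
        p.1.1 (q.1.1 x * (innPullbackInner hN q)⁻¹⁻¹) * (innPullbackInner hN p)⁻¹⁻¹
      simp [innPullbackInner_mul, mul_assoc]

theorem innPullbackToPerm_apply (p : innPullback N) (x : N) :
    innPullbackToPerm hN p x = p.1.1 x * innPullbackInner hN p :=
  congrArg (p.1.1 x * ·) (inv_inv _)

theorem conj_innPullbackToPerm_apply_one (p : innPullback N) :
    MulAut.conj (innPullbackToPerm hN p 1) = p.1.1 * p.1.2⁻¹ := by
  rw [innPullbackToPerm_apply, map_one, one_mul, conj_innPullbackInner]

theorem innPullbackToPerm_mem_Hol (p : innPullback N) : innPullbackToPerm hN p ∈ Hol N :=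
  rho_mul_toPerm_mem_Hol _ _

end InnPullback

section

variable {N : Type*} [Group N] {A B C : Subgroup (MulAut N)} (hCA : C ≤ A) (π : B →* C)
  (hπ : ∀ b : B, (b : MulAut N) * (π b : MulAut N)⁻¹ ∈ (MulAut.conj : N →* MulAut N).range)
  (hN : Function.Injective (MulAut.conj : N →* MulAut N))

noncomputable def toInnPullback :
    (A ⊓ (MulAut.conj : N →* MulAut N).range : Subgroup (MulAut N)) ⋊[Subgroup.conjAction hCA π] B
      →* innPullback N :=
  SemidirectProduct.lift
    (((MonoidHom.inr _ _).comp (Subgroup.subtype _)).codRestrict _ fun k =>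
      show 1 * (k : MulAut N)⁻¹ ∈ (MulAut.conj : N →* MulAut N).range by
        rw [one_mul]; exact inv_mem k.2.2)
    (((B.subtype.prod (C.subtype.comp π))).codRestrict _ hπ)
    fun b => by
      ext k : 1
      refine Subtype.ext (Prod.ext ?_ ?_)
      · change (1 : MulAut N) = b * 1 * (b : MulAut N)⁻¹
        group
      · rfl

theorem coe_toInnPullback (g) :
    (toInnPullback hCA π hπ g : MulAut N × MulAut N) =
      ((g.right : MulAut N), (g.left : MulAut N) * (π g.right : MulAut N)) := by
  change (1 * (g.right : MulAut N), (g.left : MulAut N) * (π g.right : MulAut N)) = _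
  rw [one_mul]

theorem bijective_innPullbackToPerm_toInnPullback_apply_one (hAB : A ⊓ B = ⊥)
    (hI : ((MulAut.conj : N →* MulAut N).range : Set (MulAut N)) ⊆ A * B) :
    Function.Bijective fun g => innPullbackToPerm hN (toInnPullback hCA π hπ g) 1 := by
  have hconj (g : _ ⋊[Subgroup.conjAction hCA π] B) :
      MulAut.conj (innPullbackToPerm hN (toInnPullback hCA π hπ g) 1) =
        g.right * ((g.left : MulAut N) * π g.right)⁻¹ := by
    rw [conj_innPullbackToPerm_apply_one, coe_toInnPullback]
  have huniq (z : N) := Subgroup.existsUnique_mul_inv_eq hAB hI (π := fun b => (π b : MulAut N))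
    (fun b => hCA (π b).2) hπ ⟨z, rfl⟩
  refine ⟨fun g g' h => ?_, fun z => ?_⟩
  · have := (huniq _).unique (y₁ := (g.left, g.right)) (y₂ := (g'.left, g'.right))
      (hconj g).symm ((hconj g').symm.trans (congrArg MulAut.conj h).symm)
    exact SemidirectProduct.ext (congrArg Prod.fst this) (congrArg Prod.snd this)
  · obtain ⟨⟨k, b⟩, hkb, -⟩ := huniq z
    exact ⟨⟨k, b⟩, hN ((hconj _).trans hkb)⟩

end

theorem stmt9_general {N : Type*} [Group N]
    (hZ : Subgroup.center N = ⊥)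
    (P A B : Subgroup (MulAut N))
    (hInnP : (MulAut.conj : N →* MulAut N).range ≤ P)
    (hfact : (P : Set (MulAut N)) = (A : Set (MulAut N)) * (B : Set (MulAut N)))
    (hexact : A ⊓ B = ⊥)
    (hAB : (A : Set (MulAut N)) *
        ((MulAut.conj : N →* MulAut N).range : Set (MulAut N)) =
      (B : Set (MulAut N)) *
        ((MulAut.conj : N →* MulAut N).range : Set (MulAut N)))
    (hsplit : ∃ C : Subgroup A,
      Subgroup.IsComplement' ((A ⊓ (MulAut.conj : N →* MulAut N).range).subgroupOf A) C) :
    ∃ α : B →* MulAut (A ⊓ (MulAut.conj : N →* MulAut N).range : Subgroup (MulAut N)),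
      Nat.card ((A ⊓ (MulAut.conj : N →* MulAut N).range : Subgroup (MulAut N)) ⋊[α] B) =
        Nat.card N ∧
      Realizable ((A ⊓ (MulAut.conj : N →* MulAut N).range : Subgroup (MulAut N)) ⋊[α] B)
        N := by
  obtain ⟨C, hC⟩ := hsplit
  set I := (MulAut.conj : N →* MulAut N).range
  have hN := MulAut.conj_injective_of_center_eq_bot hZ
  have hBC : B ≤ I ⊔ C.map A.subtype :=
    calc B ≤ B ⊔ I := le_sup_left
      _ = A ⊔ I := SetLike.coe_injective <| by rw [Subgroup.mul_normal, Subgroup.mul_normal, hAB]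
      _ ≤ I ⊔ C.map A.subtype :=
        sup_le (Subgroup.le_sup_map_subtype_of_isComplement' hC) le_sup_left
  obtain ⟨π, hπ⟩ := Subgroup.exists_monoidHom_mul_inv_mem
    (Subgroup.inf_map_subtype_eq_bot_of_isComplement' hC) hBC
  have hCA : C.map A.subtype ≤ A := Subgroup.map_subtype_le C
  have hbij := bijective_innPullbackToPerm_toInnPullback_apply_one hCA π hπ hN hexact
    (hfact ▸ hInnP)
  exact ⟨Subgroup.conjAction hCA π, Nat.card_eq_of_bijective _ hbij,
    realizable_of_bijective_eval ((innPullbackToPerm hN).comp (toInnPullback hCA π hπ))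
      (by rintro _ ⟨g, rfl⟩; exact innPullbackToPerm_mem_Hol hN _) 1 hbij⟩

/-- If `N` has trivial center, `Inn(N) ≤ P ≤ Aut(N)`, and `P = AB` is an exact
factorization with `A·Inn(N) = B·Inn(N)` and `A` splitting over `A ∩ Inn(N)`, then
for a suitable action `α` the semidirect product `(A ∩ Inn(N)) ⋊[α] B` has the same
order as `N` and the pair `((A ∩ Inn(N)) ⋊[α] B, N)` is realizable. -/
theorem stmt9 {N : Type*} [Group N] [Finite N]
    (hZ : Subgroup.center N = ⊥)
    (P A B : Subgroup (MulAut N))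
    (hInnP : (MulAut.conj : N →* MulAut N).range ≤ P)
    (hA : A ≤ P) (hB : B ≤ P)
    (hfact : (P : Set (MulAut N)) = (A : Set (MulAut N)) * (B : Set (MulAut N)))
    (hexact : A ⊓ B = ⊥)
    (hAB : (A : Set (MulAut N)) *
        ((MulAut.conj : N →* MulAut N).range : Set (MulAut N)) =
      (B : Set (MulAut N)) *
        ((MulAut.conj : N →* MulAut N).range : Set (MulAut N)))
    (hsplit : ∃ C : Subgroup A,
      Subgroup.IsComplement' ((A ⊓ (MulAut.conj : N →* MulAut N).range).subgroupOf A) C) :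
    ∃ α : B →* MulAut (A ⊓ (MulAut.conj : N →* MulAut N).range : Subgroup (MulAut N)),
      Nat.card ((A ⊓ (MulAut.conj : N →* MulAut N).range : Subgroup (MulAut N)) ⋊[α] B) =
        Nat.card N ∧
      Realizable ((A ⊓ (MulAut.conj : N →* MulAut N).range : Subgroup (MulAut N)) ⋊[α] B)
        N :=
  stmt9_general hZ P A B hInnP hfact hexact hAB hsplit
end

section
/- Let q > 1 be a prime power. Then PGL₂(F_q) admits an exact factorization PGL₂(F_q) = AB with A ∩ B = 1, where A is a cyclic subgroup of order q + 1 (image of a Singer cycle) and B is the image of the upper triangular matrices, of order q(q−1). -/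
/-- `PGL₂(F) = GL₂(F)/Z`, the quotient by the center (scalar matrices). -/
abbrev PGL2 (F : Type*) [Field F] :=
  GL (Fin 2) F ⧸ Subgroup.center (GL (Fin 2) F)

/-!
Identify `F²` with the quadratic extension `K` of `F` through a basis `1, α`. Multiplication by
`Kˣ` is the Singer cycle `Ã ≅ Kˣ`; it contains the scalars `Fˣ = Z`. An element of `Ã` stabilising
the line `F · 1` is multiplication by an element of `F`, so `Ã ∩ B̃ = Z`; and since `Kˣ` is transitive
on the nonzero vectors, every `M ∈ GL₂(F)` factors as `a * (a⁻¹ M)` with `a ∈ Ã` sending `e₀` to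
`M e₀`, whence `a⁻¹ M ∈ B̃`. As `Z ≤ Ã ∩ B̃`, both facts pass to `PGL₂(F) = GL₂(F)/Z`, and the orders
follow from `|Ã| = q² - 1`, `|Z| = q - 1` and `|PGL₂(F)| = q(q² - 1)`.
-/

open Matrix Module Subgroup
open scoped Pointwise

namespace Subgroup

variable {G : Type*} [Group G] {N H K : Subgroup G} [N.Normal]

theorem card_map_mk'_mul_card_of_le (hNH : N ≤ H) :
    Nat.card (H.map (QuotientGroup.mk' N)) * Nat.card N = Nat.card H := by
  set f := (QuotientGroup.mk' N).comp H.subtype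
  have hrange : H.map (QuotientGroup.mk' N) = f.range := by
    rw [MonoidHom.range_comp, range_subtype]
  have hker : f.ker = N.subgroupOf H := by
    rw [← MonoidHom.comap_ker, QuotientGroup.ker_mk']
    rfl
  rw [hrange, ← index_ker, hker, ← Nat.card_congr (subgroupOfEquivOfLe hNH).toEquiv, mul_comm,
    card_mul_index]

theorem isComplement'_map_mk' (hNK : N ≤ K) (hHK : H ⊓ K ≤ N)
    (hmul : (H : Set G) * (K : Set G) = Set.univ) :
    IsComplement' (H.map (QuotientGroup.mk' N)) (K.map (QuotientGroup.mk' N)) := by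
  refine isComplement'_of_disjoint_and_mul_eq_univ ?_ ?_
  · rw [disjoint_iff_inf_le]
    rintro _ ⟨⟨h, hH, rfl⟩, hmk⟩
    have hK : h ∈ K :=
      (comap_map_eq_self (f := QuotientGroup.mk' N) (by rwa [QuotientGroup.ker_mk'])).le hmk
    exact (QuotientGroup.eq_one_iff h).mpr (hHK ⟨hH, hK⟩)
  · rw [coe_map, coe_map, ← Set.image_mul, hmul,
      Set.image_univ_of_surjective (QuotientGroup.mk'_surjective N)]

end Subgroup

theorem exists_basis_fin_two_zero_eq_one {F K : Type*} [Field F] [Field K] [Algebra F K]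
    [FiniteDimensional F K] [Algebra.IsSeparable F K] (h : finrank F K = 2) :
    ∃ b : Basis (Fin 2) F K, b 0 = 1 := by
  let pb := Field.powerBasisOfFiniteOfSeparable F K
  have hdim : pb.dim = 2 := pb.finrank.symm.trans h
  exact ⟨pb.basis.reindex (finCongr hdim), by simp⟩

namespace Matrix.GeneralLinearGroup

theorem card_center {F n : Type*} [Field F] [Finite F] [Fintype n] [DecidableEq n] [Nonempty n] :
    Nat.card (center (GL n F)) = Nat.card F - 1 := by
  have hinj : Function.Injective (scalar n : Fˣ →* GL n F) := by
    intro c d h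
    obtain ⟨i⟩ := ‹Nonempty n›
    ext
    simpa using congrArg (fun M : GL n F => (M : Matrix n n F) i i) h
  rw [center_eq_range_scalar, ← Nat.card_congr (MonoidHom.ofInjective hinj).toEquiv,
    Nat.card_units]

section Borel

variable (R : Type*) [CommRing R]

def borel : Subgroup (GL (Fin 2) R) where
  carrier := {M | (M : Matrix (Fin 2) (Fin 2) R) 1 0 = 0}
  one_mem' := by simp
  mul_mem' {a b} ha hb := by simp_all [Matrix.mul_apply, Fin.sum_univ_two]
  inv_mem' {a} ha := by simp_all [Matrix.coe_units_inv, Matrix.inv_def, Matrix.adjugate_fin_two]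

variable {R}

theorem center_le_borel : center (GL (Fin 2) R) ≤ borel R := by
  rw [center_eq_range_scalar]
  rintro _ ⟨c, rfl⟩
  simp [borel]

theorem inv_mul_mem_borel_of_col_zero_eq {g M : GL (Fin 2) R}
    (h : ∀ i, (g : Matrix (Fin 2) (Fin 2) R) i 0 = M i 0) : g⁻¹ * M ∈ borel R := by
  have hcol : ((g⁻¹ * M : GL (Fin 2) R) : Matrix (Fin 2) (Fin 2) R) 1 0 =
      ((g⁻¹ * g : GL (Fin 2) R) : Matrix (Fin 2) (Fin 2) R) 1 0 := by
    simp only [Units.val_mul, Matrix.mul_apply, h]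
  show ((g⁻¹ * M : GL (Fin 2) R) : Matrix (Fin 2) (Fin 2) R) 1 0 = 0
  rw [hcol, inv_mul_cancel]
  simp

end Borel

section Singer

variable {F K : Type*} [Field F] [Field K] [Algebra F K] (b : Basis (Fin 2) F K)

noncomputable def singer : Kˣ →* GL (Fin 2) F :=
  Units.map (Algebra.leftMulMatrix b).toMonoidHom

theorem singer_injective : Function.Injective (singer b) :=
  Units.map_injective (Algebra.leftMulMatrix_injective b)

theorem singer_units_map_algebraMap (c : Fˣ) :
    singer b (Units.map (algebraMap F K) c) = scalar (Fin 2) c := by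
  ext : 1
  simp [singer, Matrix.algebraMap_eq_diagonal]

theorem center_le_range_singer : center (GL (Fin 2) F) ≤ (singer b).range := by
  rw [center_eq_range_scalar]
  rintro _ ⟨c, rfl⟩
  exact ⟨_, singer_units_map_algebraMap b c⟩

theorem card_range_singer [Finite K] : Nat.card (singer b).range = Nat.card K - 1 := by
  rw [← Nat.card_congr (MonoidHom.ofInjective (singer_injective b)).toEquiv, Nat.card_units]

theorem isCyclic_range_singer [Finite K] : IsCyclic (singer b).range :=
  isCyclic_of_surjective _ (singer b).rangeRestrict_surjective

variable {b}

theorem singer_apply_zero (hb : b 0 = 1) (x : Kˣ) (i : Fin 2) :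
    (singer b x : Matrix (Fin 2) (Fin 2) F) i 0 = b.repr x i := by
  simp [singer, Algebra.leftMulMatrix_eq_repr_mul, hb]

theorem range_singer_inf_borel_le_center (hb : b 0 = 1) :
    (singer b).range ⊓ borel F ≤ center (GL (Fin 2) F) := by
  rintro _ ⟨⟨x, rfl⟩, hx⟩
  have hx1 : b.repr x 1 = 0 := (singer_apply_zero hb x 1).symm.trans hx
  have hx_scalar : (x : K) = algebraMap F K (b.repr x 0) :=
    calc (x : K) = ∑ i, b.repr x i • b i := (b.sum_repr x).symm
      _ = b.repr x 0 • 1 := by simp only [Fin.sum_univ_two, hx1, hb, zero_smul, add_zero]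
      _ = algebraMap F K (b.repr x 0) := (Algebra.algebraMap_eq_smul_one _).symm
  rw [mem_center_iff_val_mem_range_scalar]
  generalize b.repr x 0 = c at hx_scalar
  exact ⟨c, by simp [singer, hx_scalar, Matrix.algebraMap_eq_diagonal]⟩

theorem range_singer_mul_borel (hb : b 0 = 1) :
    ((singer b).range : Set (GL (Fin 2) F)) * (borel F : Set (GL (Fin 2) F)) = Set.univ := by
  refine Set.eq_univ_of_forall fun M => ?_
  set x : K := b.equivFun.symm fun i => (M : Matrix (Fin 2) (Fin 2) F) i 0
  have hx : x ≠ 0 := by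
    intro hx0
    have hcol : ∀ i, (M : Matrix (Fin 2) (Fin 2) F) i 0 = 0 := fun i => by
      simpa using congrFun (b.equivFun.symm.injective (hx0.trans (map_zero _).symm)) i
    exact ((isUnit_iff_isUnit_det _).mp M.isUnit).ne_zero (det_eq_zero_of_column_eq_zero 0 hcol)
  have hcol : ∀ i, (singer b (Units.mk0 x hx) : Matrix (Fin 2) (Fin 2) F) i 0 = M i 0 := by
    simp [singer_apply_zero hb, x]
  exact Set.mem_mul.mpr
    ⟨_, ⟨Units.mk0 x hx, rfl⟩, _, inv_mul_mem_borel_of_col_zero_eq hcol, mul_inv_cancel_left _ _⟩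

end Singer

end Matrix.GeneralLinearGroup

open Matrix.GeneralLinearGroup

theorem PGL2.card {F : Type*} [Field F] [Fintype F] :
    Nat.card (PGL2 F) = Fintype.card F * (Fintype.card F ^ 2 - 1) := by
  have hGL := card_eq_card_quotient_mul_card_subgroup (center (GL (Fin 2) F))
  rw [card_GL_field, card_center, Nat.card_eq_fintype_card (α := F)] at hGL
  set q := Fintype.card F
  have hq : 0 < q - 1 := Nat.sub_pos_of_lt Fintype.one_lt_card
  have hq2 : q ^ 2 - q = q * (q - 1) := by rw [sq, Nat.mul_sub_one]
  refine Nat.eq_of_mul_eq_mul_right hq ?_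
  rw [← hGL, Fin.prod_univ_two]
  simp only [Fin.val_zero, Fin.val_one, pow_zero, pow_one, hq2]
  ring

theorem PGL2.isComplement'_singer_borel {F K : Type*} [Field F] [Field K] [Algebra F K]
    {b : Basis (Fin 2) F K} (hb : b 0 = 1) :
    IsComplement' ((singer b).range.map (QuotientGroup.mk' (center (GL (Fin 2) F))))
      ((borel F).map (QuotientGroup.mk' (center (GL (Fin 2) F)))) :=
  isComplement'_map_mk' center_le_borel (range_singer_inf_borel_le_center hb)
    (range_singer_mul_borel hb)

/-- For a finite field `F_q` (`q > 1` automatic), `PGL₂(F_q)` admits an exact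
factorization `PGL₂(F_q) = AB` with `A ∩ B = 1`, where `A` is cyclic of order
`q + 1` (the image of a Singer cycle) and `B` is the image of the invertible upper
triangular matrices, of order `q(q − 1)`. -/
theorem stmt16 {F : Type*} [Field F] [Fintype F] (q : ℕ) (hq : q = Fintype.card F) :
    ∃ A B : Subgroup (PGL2 F),
      (∀ p : PGL2 F, ∃ a ∈ A, ∃ b ∈ B, p = a * b) ∧
      A ⊓ B = ⊥ ∧
      IsCyclic A ∧ Nat.card A = q + 1 ∧
      (∃ Atil : Subgroup (GL (Fin 2) F), IsCyclic Atil ∧ Nat.card Atil = q ^ 2 - 1 ∧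
        A = Atil.map (QuotientGroup.mk' (Subgroup.center (GL (Fin 2) F)))) ∧
      Nat.card B = q * (q - 1) ∧
      (B : Set (PGL2 F)) =
        (QuotientGroup.mk' (Subgroup.center (GL (Fin 2) F))) ''
          {M : GL (Fin 2) F | (M : Matrix (Fin 2) (Fin 2) F) 1 0 = 0} := by
  obtain ⟨p, _⟩ := CharP.exists F
  have : Fact p.Prime := ⟨CharP.char_is_prime F p⟩
  obtain ⟨b, hb⟩ := exists_basis_fin_two_zero_eq_one (FiniteField.finrank_extension F p 2)
  have hAtil : Nat.card (singer b).range = q ^ 2 - 1 := by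
    rw [card_range_singer, FiniteField.natCard_extension, Nat.card_eq_fintype_card, hq]
  have hq1 : 0 < q - 1 := hq ▸ Nat.sub_pos_of_lt Fintype.one_lt_card
  have hq2 : q ^ 2 - 1 = (q + 1) * (q - 1) := by simpa using Nat.sq_sub_sq q 1
  have hAB := PGL2.isComplement'_singer_borel hb
  have hA : Nat.card ((singer b).range.map (QuotientGroup.mk' (center (GL (Fin 2) F)))) = q + 1 := by
    have h := card_map_mk'_mul_card_of_le (center_le_range_singer b)
    rw [hAtil, card_center, Nat.card_eq_fintype_card (α := F), ← hq, hq2] at h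
    exact Nat.eq_of_mul_eq_mul_right hq1 h
  refine ⟨_, _, fun g => ?_, hAB.disjoint.eq_bot, ?_, hA, ⟨_, isCyclic_range_singer b, hAtil, rfl⟩,
    ?_, by rw [coe_map]; rfl⟩
  · obtain ⟨⟨a, c⟩, h⟩ := hAB.2 g
    exact ⟨a, a.2, c, c.2, h.symm⟩
  · rw [MonoidHom.map_range]
    exact isCyclic_of_surjective _ (MonoidHom.rangeRestrict_surjective _)
  · have h := hAB.card_mul_card
    rw [PGL2.card, ← hq, hA, hq2] at h
    refine Nat.eq_of_mul_eq_mul_left q.add_one_pos (h.trans ?_)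
    ring
end

section
/- For q ≡ 0 (mod 2) a prime power with q ≠ 2, the pair (A × B, PSL₂(F_q)) is realizable, where A is cyclic of order q+1 and B ≅ F_q ⋊ F_q^× has order q(q−1); in particular PSL₂(F_q) is the type of a Hopf-Galois structure on some solvable Galois extension. -/
/-- `PSL₂(F) = SL₂(F)/Z`, the quotient by the center. -/
abbrev PSL2 (F : Type*) [Field F] :=
  Matrix.SpecialLinearGroup (Fin 2) F ⧸
    Subgroup.center (Matrix.SpecialLinearGroup (Fin 2) F)

/-!
For even `q` the center of `SL₂(F_q)` is trivial, so `PSL₂(F_q) = SL₂(F_q)` has order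
`(q + 1) q (q - 1)`. Multiplication on `F_{q²} ≅ F_q²` embeds the norm-one group of `F_{q²}`,
cyclic of order `q + 1` (the norm onto `F_qˣ` is surjective), and the upper triangular matrices
`diag(u, u⁻¹) · !![1, x; 0, 1]` form a copy of `F_q ⋊ F_qˣ` of order `q (q - 1)`. For even `q` these
orders are coprime, so `A ∩ x B x⁻¹ = 1` for every `x`; hence `(a, b) ↦ (x ↦ a x b⁻¹)` is a free
action of `A × B`, transitive by counting, and it lies in the holomorph because a left multiplication
is an inner automorphism composed with a right multiplication.
-/

open Matrix

section ExactFactorization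

variable {G : Type*} [Group G]

lemma mulLeft_mem_hol (g : G) : Equiv.mulLeft g ∈ Hol G := by
  have h : Equiv.mulLeft g = MulAut.toPerm G (MulAut.conj g) * rho G g⁻¹ := by
    ext x
    change g * x = g * (x * g⁻¹⁻¹) * g⁻¹
    group
  rw [h]
  exact mul_mem (Subgroup.subset_closure (Or.inr ⟨_, rfl⟩))
    (Subgroup.subset_closure (Or.inl ⟨_, rfl⟩))

lemma rho_mem_hol (g : G) : rho G g ∈ Hol G :=
  Subgroup.subset_closure (Or.inl ⟨g, rfl⟩)

lemma Subgroup.eq_one_of_eq_conj_of_coprime {A B : Subgroup G}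
    (hcop : (Nat.card A).Coprime (Nat.card B)) {a b x : G} (ha : a ∈ A) (hb : b ∈ B)
    (h : a = x * b * x⁻¹) : b = 1 := by
  have hord : orderOf a = orderOf b := by
    rw [h, ← MulAut.conj_apply, MulEquiv.orderOf_eq]
  exact orderOf_eq_one_iff.mp <| Nat.eq_one_of_dvd_coprimes hcop
    (hord ▸ A.orderOf_dvd_natCard ha) (B.orderOf_dvd_natCard hb)

def mulLeftMulRight (A B : Subgroup G) : A × B →* Equiv.Perm G where
  toFun p := Equiv.mulLeft (p.1 : G) * rho G p.2
  map_one' := by ext; simp [rho]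
  map_mul' p q := by ext; simp [rho, mul_assoc]

variable {A B : Subgroup G}

lemma mulLeftMulRight_apply (p : A × B) (x : G) :
    mulLeftMulRight A B p x = p.1 * x * (p.2 : G)⁻¹ := by
  simp [mulLeftMulRight, rho, mul_assoc]

lemma range_mulLeftMulRight_le_hol : (mulLeftMulRight A B).range ≤ Hol G := by
  rintro _ ⟨p, rfl⟩
  exact mul_mem (mulLeft_mem_hol _) (rho_mem_hol _)

lemma eq_one_of_mulLeftMulRight_apply_eq (hcop : (Nat.card A).Coprime (Nat.card B))
    {p : A × B} {x : G} (h : mulLeftMulRight A B p x = x) : p = 1 := by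
  rw [mulLeftMulRight_apply, mul_inv_eq_iff_eq_mul] at h
  have hb : (p.2 : G) = 1 :=
    Subgroup.eq_one_of_eq_conj_of_coprime hcop p.1.2 p.2.2 (eq_mul_inv_of_mul_eq h)
  have ha : (p.1 : G) = 1 := by simpa [hb] using h
  exact Prod.ext (Subtype.ext ha) (Subtype.ext hb)

lemma mulLeftMulRight_apply_injective (hcop : (Nat.card A).Coprime (Nat.card B)) (x : G) :
    Function.Injective fun p => mulLeftMulRight A B p x := by
  intro p q hpq
  have h : mulLeftMulRight A B (q⁻¹ * p) x = x := by
    simp only [map_mul, map_inv, Equiv.Perm.mul_apply, hpq, Equiv.Perm.coe_inv,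
      Equiv.symm_apply_apply]
  exact (inv_mul_eq_one.mp (eq_one_of_mulLeftMulRight_apply_eq hcop h)).symm

theorem realizable_of_coprime_of_card_mul_eq [Finite G]
    (hcop : (Nat.card A).Coprime (Nat.card B)) (hcard : Nat.card A * Nat.card B = Nat.card G) :
    Realizable (A × B) G := by
  have hinj : Function.Injective (mulLeftMulRight A B) := fun p q h =>
    mulLeftMulRight_apply_injective hcop 1 (congrArg (· 1) h)
  refine ⟨_, range_mulLeftMulRight_le_hol, ⟨fun x y => ?_, ?_⟩, ⟨MonoidHom.ofInjective hinj⟩⟩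
  · obtain ⟨p, hp⟩ := ((mulLeftMulRight_apply_injective hcop x).bijective_of_nat_card_le
      (by rw [Nat.card_prod, hcard])).2 y
    exact ⟨_, ⟨p, rfl⟩, hp⟩
  · rintro _ ⟨p, rfl⟩ hp x hx
    exact hp (by rw [eq_one_of_mulLeftMulRight_apply_eq hcop hx, map_one])

end ExactFactorization

lemma MonoidHom.card_ker_mul_card_of_surjective {G H : Type*} [Group G] [Group H] (f : G →* H)
    (hf : Function.Surjective f) : Nat.card f.ker * Nat.card H = Nat.card G := by
  rw [← f.ker.card_mul_index, Subgroup.index_ker f, f.range_eq_top.mpr hf, Subgroup.card_top]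

namespace Matrix.SpecialLinearGroup

lemma center_eq_bot_of_charP_two {R : Type*} [CommRing R] [NoZeroDivisors R] [CharP R 2] :
    Subgroup.center (SpecialLinearGroup (Fin 2) R) = ⊥ := by
  refine eq_bot_iff.mpr fun A hA => ?_
  obtain ⟨r, hr, hrA⟩ := mem_center_iff.mp hA
  have hr1 : r = 1 := CharTwo.sq_injective (by simpa using hr)
  exact Subgroup.mem_bot.mpr (Subtype.ext (by simp [← hrA, hr1]))

variable {n : Type*} [Fintype n] [DecidableEq n]

lemma card_mul_card_units {F : Type*} [Field F] [Nonempty n] :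
    Nat.card (SpecialLinearGroup n F) * Nat.card Fˣ = Nat.card (GL n F) := by
  have hrange : (toGL : SpecialLinearGroup n F →* GL n F).range = GeneralLinearGroup.det.ker :=
    SetLike.coe_injective (by rw [MonoidHom.coe_range, range_toGL, MonoidHom.coe_ker])
  rw [Nat.card_congr (MonoidHom.ofInjective toGL_injective).toEquiv, hrange,
    MonoidHom.card_ker_mul_card_of_surjective _ GeneralLinearGroup.det_surjective]

lemma card_fin_two {F : Type*} [Field F] [Finite F] :
    Nat.card (SpecialLinearGroup (Fin 2) F) =
      (Nat.card F + 1) * (Nat.card F * (Nat.card F - 1)) := by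
  have := Fintype.ofFinite F
  have h := card_mul_card_units (n := Fin 2) (F := F)
  rw [card_GL_field, Fin.prod_univ_two, Nat.card_units, Fintype.card_eq_nat_card] at h
  simp only [Fin.val_zero, Fin.val_one, pow_zero, pow_one] at h
  set q := Nat.card F
  have hq : 1 < q := Finite.one_lt_card
  refine Nat.eq_of_mul_eq_mul_right (Nat.sub_pos_of_lt hq) (h.trans ?_)
  have hq2 : q ≤ q ^ 2 := Nat.le_self_pow two_ne_zero q
  zify [hq.le, hq2, hq.le.trans hq2]
  ring

end Matrix.SpecialLinearGroup

section Borel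

variable (R : Type*) [CommRing R]

/-- Conjugation by `diag(u, u⁻¹)` multiplies the corner entry of `!![1, x; 0, 1]` by `u²`. -/
def sqSMulAut : Rˣ →* MulAut (Multiplicative R) :=
  MonoidHom.mk' (fun u => AddEquiv.toMultiplicative (DistribMulAction.toAddAut Rˣ R (u ^ 2)))
    (fun u v => by ext x; simp [mul_pow, mul_smul])

def upperUnitriangular : Multiplicative R →* SpecialLinearGroup (Fin 2) R where
  toFun x := ⟨!![1, x.toAdd; 0, 1], by simp [det_fin_two_of]⟩
  map_one' := Subtype.ext <| by simp [one_fin_two]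
  map_mul' x y := Subtype.ext <| by
    change _ = !![1, x.toAdd; 0, 1] * !![1, y.toAdd; 0, 1]
    simp [add_comm]

def diagonalUnits : Rˣ →* SpecialLinearGroup (Fin 2) R where
  toFun u := ⟨!![(u : R), 0; 0, ((u⁻¹ : Rˣ) : R)], by simp [det_fin_two_of]⟩
  map_one' := Subtype.ext <| by simp [one_fin_two]
  map_mul' u v := Subtype.ext <| by
    change _ = !![(u : R), 0; 0, ((u⁻¹ : Rˣ) : R)] * !![(v : R), 0; 0, ((v⁻¹ : Rˣ) : R)]
    simp [mul_comm]

variable {R}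

@[simp]
lemma toAdd_sqSMulAut_apply (u : Rˣ) (x : Multiplicative R) :
    (sqSMulAut R u x).toAdd = (u : R) ^ 2 * x.toAdd := by
  simp [sqSMulAut, Units.smul_def]

@[simp]
lemma coe_upperUnitriangular (x : Multiplicative R) :
    (upperUnitriangular R x : Matrix (Fin 2) (Fin 2) R) = !![1, x.toAdd; 0, 1] := rfl

@[simp]
lemma coe_diagonalUnits (u : Rˣ) :
    (diagonalUnits R u : Matrix (Fin 2) (Fin 2) R) = !![(u : R), 0; 0, ((u⁻¹ : Rˣ) : R)] := rfl

lemma diagonalUnits_mul_upperUnitriangular (u : Rˣ) (x : Multiplicative R) :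
    diagonalUnits R u * upperUnitriangular R x =
      upperUnitriangular R (sqSMulAut R u x) * diagonalUnits R u := by
  ext i j
  fin_cases i <;> fin_cases j <;> simp
  linear_combination (-(u : R) * x.toAdd) * u.mul_inv

variable (R) in
def borelHom : Multiplicative R ⋊[sqSMulAut R] Rˣ →* SpecialLinearGroup (Fin 2) R :=
  SemidirectProduct.lift (upperUnitriangular R) (diagonalUnits R) fun u =>
    MonoidHom.ext fun x => by
      simp [MulAut.conj_apply, diagonalUnits_mul_upperUnitriangular]

@[simp]
lemma coe_borelHom (p : Multiplicative R ⋊[sqSMulAut R] Rˣ) :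
    (borelHom R p : Matrix (Fin 2) (Fin 2) R) =
      !![(p.right : R), p.left.toAdd * ((p.right⁻¹ : Rˣ) : R); 0, ((p.right⁻¹ : Rˣ) : R)] := by
  simp [borelHom, SemidirectProduct.lift]

lemma borelHom_injective : Function.Injective (borelHom R) := by
  refine (injective_iff_map_eq_one _).mpr fun p hp => SemidirectProduct.ext ?_ ?_
  · simpa using congrArg (fun A : SpecialLinearGroup (Fin 2) R => A 0 1) hp
  · simpa using congrArg (fun A : SpecialLinearGroup (Fin 2) R => A 0 0) hp

end Borel

lemma card_range_borelHom (F : Type*) [Field F] [Finite F] :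
    Nat.card (borelHom F).range = Nat.card F * (Nat.card F - 1) := by
  rw [← Nat.card_congr (MonoidHom.ofInjective borelHom_injective).toEquiv,
    SemidirectProduct.card, Nat.card_congr Multiplicative.toAdd, Nat.card_units]

section NormOne

variable {F K : Type*} [Field F] [CommRing K] [Algebra F K]
  {ι : Type*} [Fintype ι] [DecidableEq ι]

noncomputable def normOneToSL (b : Module.Basis ι F K) :
    (Units.map (Algebra.norm F : K →* F)).ker →* SpecialLinearGroup ι F where
  toFun z := ⟨Algebra.leftMulMatrix b (z : Kˣ), by
    rw [← Algebra.norm_eq_matrix_det]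
    exact congrArg Units.val z.2⟩
  map_one' := Subtype.ext (by simp)
  map_mul' _ _ := Subtype.ext <| by
    simp only [Subgroup.coe_mul, Units.val_mul, map_mul]
    rfl

lemma normOneToSL_injective (b : Module.Basis ι F K) : Function.Injective (normOneToSL b) :=
  fun _ _ h => Subtype.ext <| Units.ext <|
    Algebra.leftMulMatrix_injective b (congrArg Subtype.val h)

end NormOne

theorem Matrix.SpecialLinearGroup.exists_isCyclic_card_eq_card_add_one
    (F : Type*) [Field F] [Finite F] :
    ∃ A : Subgroup (SpecialLinearGroup (Fin 2) F), IsCyclic A ∧ Nat.card A = Nat.card F + 1 := by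
  obtain ⟨p, _⟩ := CharP.exists F
  have : Fact p.Prime := ⟨CharP.char_is_prime F p⟩
  let K := FiniteField.Extension F p 2
  let b := Module.finBasisOfFinrankEq F K (FiniteField.finrank_extension F p 2)
  let e := MonoidHom.ofInjective (normOneToSL_injective b)
  have hcard : Nat.card (Units.map (Algebra.norm F : K →* F)).ker * Nat.card Fˣ =
      (Nat.card F + 1) * Nat.card Fˣ := by
    rw [MonoidHom.card_ker_mul_card_of_surjective _ (FiniteField.unitsMap_norm_surjective F K),
      Nat.card_units, Nat.card_units, FiniteField.natCard_extension]
    have hq : 1 ≤ Nat.card F := Finite.card_pos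
    zify [hq, Nat.one_le_pow _ _ hq]
    ring
  refine ⟨(normOneToSL b).range, e.isCyclic.mp inferInstance, ?_⟩
  rw [← Nat.card_congr e.toEquiv]
  exact Nat.eq_of_mul_eq_mul_right Nat.card_pos hcard

instance SemidirectProduct.isSolvable {N H : Type*} [Group N] [Group H] {φ : H →* MulAut N}
    [Group.IsSolvable N] [Group.IsSolvable H] : Group.IsSolvable (N ⋊[φ] H) :=
  Group.isSolvable_of_ker_le_range inl rightHom range_inl_eq_ker_rightHom.ge

lemma Nat.coprime_add_one_mul_sub_one_of_even {q : ℕ} (hq : Even q) :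
    (q + 1).Coprime (q * (q - 1)) := by
  refine Nat.Coprime.mul_right (Nat.coprime_self_add_left.mpr (Nat.coprime_one_left q)) ?_
  rcases Nat.eq_zero_or_pos q with rfl | hpos
  · exact Nat.coprime_one_left 0
  · rw [show q + 1 = 2 + (q - 1) by omega, Nat.coprime_add_self_left, Nat.coprime_two_left]
    exact Nat.Even.sub_odd hpos hq odd_one

theorem stmt17_general {F : Type*} [Field F] [Fintype F] (q : ℕ) (hq : q = Fintype.card F)
    (heven : q % 2 = 0) :
    ∃ A B : Subgroup (PSL2 F),
      IsCyclic A ∧ Nat.card A = q + 1 ∧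
      Nat.card B = q * (q - 1) ∧
      (∃ φ : Fˣ →* MulAut (Multiplicative F),
        Nonempty (B ≃* Multiplicative F ⋊[φ] Fˣ)) ∧
      IsSolvable (A × B) ∧
      Realizable (A × B) (PSL2 F) := by
  have : CharP F 2 := ringChar.eq_iff.mp (FiniteField.even_card_iff_char_two.mpr (hq ▸ heven))
  rw [Fintype.card_eq_nat_card] at hq
  subst hq
  let π : SpecialLinearGroup (Fin 2) F →* PSL2 F :=
    ((QuotientGroup.quotientMulEquivOfEq SpecialLinearGroup.center_eq_bot_of_charP_two).trans
      QuotientGroup.quotientBot).symm.toMonoidHom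
  have hπ : Function.Bijective π := MulEquiv.bijective _
  obtain ⟨A, hAcyc, hAcard⟩ := SpecialLinearGroup.exists_isCyclic_card_eq_card_add_one F
  have eB : Multiplicative F ⋊[sqSMulAut F] Fˣ ≃* (borelHom F).range.map π :=
    (MonoidHom.ofInjective borelHom_injective).trans ((borelHom F).range.equivMapOfInjective π hπ.1)
  have hA : Nat.card (A.map π) = Nat.card F + 1 :=
    (Subgroup.card_map_of_injective hπ.1).trans hAcard
  have hB : Nat.card ((borelHom F).range.map π) = Nat.card F * (Nat.card F - 1) :=
    (Subgroup.card_map_of_injective hπ.1).trans (card_range_borelHom F)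
  have hAcyc' : IsCyclic (A.map π) := (A.equivMapOfInjective π hπ.1).isCyclic.mp hAcyc
  have : Group.IsSolvable (A.map π) := Group.isSolvable_of_comm mul_comm'
  have : Group.IsSolvable ((borelHom F).range.map π) :=
    Group.isSolvable_of_isSolvable_injective (f := eB.symm.toMonoidHom) eB.symm.injective
  refine ⟨A.map π, (borelHom F).range.map π, hAcyc', hA, hB, ⟨sqSMulAut F, ⟨eB.symm⟩⟩,
    (inferInstance : Group.IsSolvable _), realizable_of_coprime_of_card_mul_eq ?_ ?_⟩
  · rw [hA, hB]
    exact Nat.coprime_add_one_mul_sub_one_of_even (Nat.even_iff.mpr heven)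
  · rw [hA, hB, ← Nat.card_congr (Equiv.ofBijective π hπ), SpecialLinearGroup.card_fin_two]

/-- For an even prime power `q ≠ 2`, the pair `(A × B, PSL₂(F_q))` is realizable, where
`A` is cyclic of order `q + 1` and `B ≅ F_q ⋊ F_qˣ` has order `q(q − 1)`; in particular
`PSL₂(F_q)` is the type of a Hopf-Galois structure on a solvable extension. -/
theorem stmt17 {F : Type*} [Field F] [Fintype F] (q : ℕ) (hq : q = Fintype.card F)
    (heven : q % 2 = 0) (hq2 : q ≠ 2) :
    ∃ A B : Subgroup (PSL2 F),
      IsCyclic A ∧ Nat.card A = q + 1 ∧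
      Nat.card B = q * (q - 1) ∧
      (∃ φ : Fˣ →* MulAut (Multiplicative F),
        Nonempty (B ≃* Multiplicative F ⋊[φ] Fˣ)) ∧
      IsSolvable (A × B) ∧
      Realizable (A × B) (PSL2 F) :=
  stmt17_general q hq heven
end
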